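/- arXiv:1602.02007 — 2 statements merged into one kernel-verified Lean document; each statement's English description precedes it below -/
import Mathlib

section
/- Let X_n, Y_n be càdlàg functions on [0,∞) and X, Y continuous functions such that each Y_n is nondecreasing, and X_n → X, Y_n → Y locally uniformly. Then Y is nondecreasing and ∫₀ᵗ X_n(s) dY_n(s) → ∫₀ᵗ X(s) dY(s) locally uniformly in t ≥ 0. -/
/-!
Write `∫ Xₙ dYₙ - ∫ X dY = ∫ (Xₙ - X) dYₙ + (∫ X dYₙ - ∫ X dY)`. The first term is at most
`sup |Xₙ - X|` times the mass `Yₙ T - Yₙ 0`, which stays bounded because it converges to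
`Y T - Y 0`. For the second, the uniform continuity of `X` on `[0, T]` gives one grid on which the
left-endpoint Riemann–Stieltjes sums approximate `∫₀ᵗ X dμ` for every `t ≤ T` and every Stieltjes
measure `μ`, with error proportional to the mass of `μ`; these sums involve only finitely many
values of the integrator, so they converge uniformly in `t` when `Yₙ → Y` uniformly.
-/

open MeasureTheory Set Filter Function

/-- `x` is càdlàg: right-continuous with left limits. -/
def IsCadlag (x : ℝ → ℝ) : Prop :=
  (∀ t : ℝ, ContinuousWithinAt x (Set.Ici t) t) ∧
  (∀ t : ℝ, Tendsto x (nhdsWithin t (Set.Iio t)) (nhds (leftLim x t)))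

open Topology

theorem measurable_of_continuousWithinAt_Ici {β : Type*} [TopologicalSpace β]
    [TopologicalSpace.PseudoMetrizableSpace β] [MeasurableSpace β] [BorelSpace β] {f : ℝ → β}
    (hf : ∀ t, ContinuousWithinAt f (Ici t) t) : Measurable f := by
  -- `t ↦ ⌈(n + 1) t⌉ / (n + 1)` takes countably many values and decreases to `t`
  set r : ℕ → ℝ → ℝ := fun n t => ⌈t * (n + 1)⌉ / (n + 1)
  have hr_ge (n : ℕ) (t : ℝ) : t ≤ r n t := by
    rw [le_div_iff₀ (by positivity)]; exact Int.le_ceil _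
  have hr_le (n : ℕ) (t : ℝ) : r n t ≤ t + 1 / (n + 1) := by
    rw [div_le_iff₀ (by positivity), add_mul, one_div_mul_cancel (by positivity)]
    exact (Int.ceil_lt_add_one _).le
  have hr_tendsto (t : ℝ) : Tendsto (fun n => r n t) atTop (𝓝[≥] t) := by
    refine tendsto_nhdsWithin_of_tendsto_nhds_of_eventually_within _ ?_
      (Eventually.of_forall (hr_ge · t))
    have := tendsto_one_div_add_atTop_nhds_zero_nat.const_add t
    rw [add_zero] at this
    exact tendsto_of_tendsto_of_tendsto_of_le_of_le tendsto_const_nhds this (hr_ge · t) (hr_le · t)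
  refine measurable_of_tendsto_metrizable (f := fun n t => f (r n t)) (fun n => ?_) ?_
  · exact (measurable_of_countable fun z : ℤ => f (z / (n + 1))).comp
      (Int.measurable_ceil.comp (measurable_id.mul_const _))
  · exact tendsto_pi_nhds.2 fun t => (hf t).tendsto.comp (hr_tendsto t)

theorem tendstoUniformlyOn_finset_sum {κ ι α β : Type*} [UniformSpace β] [AddCommGroup β]
    [IsUniformAddGroup β] {l : Filter ι} {S : Set α} (s : Finset κ) {F : κ → ι → α → β}
    {f : κ → α → β} (h : ∀ k ∈ s, TendstoUniformlyOn (F k) (f k) l S) :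
    TendstoUniformlyOn (fun i x => ∑ k ∈ s, F k i x) (fun x => ∑ k ∈ s, f k x) l S := by
  classical
  induction s using Finset.induction_on with
  | empty =>
    simpa using tendsto_const_nhds.tendstoUniformlyOn_const (g := fun _ : ι => (0 : β)) S
  | insert k s hk ih =>
    simp only [Finset.sum_insert hk]
    exact (h k (s.mem_insert_self k)).fun_add (ih fun k' hk' => h k' (s.mem_insert_of_mem hk'))

def riemannStieltjesSum (g f : ℝ → ℝ) (a h : ℝ) (K : ℕ) (t : ℝ) : ℝ :=
  ∑ i ∈ Finset.range K,
    g (a + i * h) * (f (min (a + (i + 1 : ℕ) * h) t) - f (min (a + i * h) t))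

theorem tendstoUniformlyOn_riemannStieltjesSum {ι : Type*} {l : Filter ι} {F : ι → ℝ → ℝ}
    {f : ℝ → ℝ} {a b h : ℝ} (hh : 0 ≤ h) (hF : TendstoUniformlyOn F f l (Icc a b))
    (g : ℝ → ℝ) (K : ℕ) :
    TendstoUniformlyOn (fun i => riemannStieltjesSum g (F i) a h K)
      (riemannStieltjesSum g f a h K) l (Icc a b) := by
  have hpoint (c : ℝ) (hc : 0 ≤ c) :
      TendstoUniformlyOn (fun i t => F i (min (a + c) t)) (fun t => f (min (a + c) t)) l
        (Icc a b) :=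
    (hF.comp _).mono fun t ht =>
      ⟨le_min (le_add_of_nonneg_right hc) ht.1, (min_le_right _ _).trans ht.2⟩
  refine tendstoUniformlyOn_finset_sum _ fun i _ => ?_
  exact (uniformContinuous_const_smul (g (a + i * h))).comp_tendstoUniformlyOn
    ((hpoint _ (by positivity)).fun_sub (hpoint _ (by positivity)))

namespace StieltjesFunction

variable (f : StieltjesFunction ℝ)

theorem measureReal_Ioc {a b : ℝ} (hab : a ≤ b) : f.measure.real (Ioc a b) = f b - f a := by
  rw [measureReal_def, measure_Ioc, ENNReal.toReal_ofReal (sub_nonneg.2 (f.mono hab))]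

theorem abs_setIntegral_Ioc_le {a b C : ℝ} (hab : a ≤ b) {g : ℝ → ℝ}
    (hg : ∀ x ∈ Ioc a b, |g x| ≤ C) : |∫ x in Ioc a b, g x ∂f.measure| ≤ C * (f b - f a) := by
  rw [← f.measureReal_Ioc hab]
  exact norm_setIntegral_le_of_norm_le_const (f := g) measure_Ioc_lt_top hg

theorem abs_setIntegral_Ioc_sub_sum_le {g : ℝ → ℝ} {u : ℕ → ℝ} (hu : Monotone u) {K : ℕ}
    (hg : IntegrableOn g (Ioc (u 0) (u K)) f.measure) (c : ℕ → ℝ) {ε : ℝ}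
    (hε : ∀ i < K, ∀ x ∈ Ioc (u i) (u (i + 1)), |g x - c i| ≤ ε) :
    |∫ x in Ioc (u 0) (u K), g x ∂f.measure - ∑ i ∈ Finset.range K, c i * (f (u (i + 1)) - f (u i))|
      ≤ ε * (f (u K) - f (u 0)) := by
  induction K with
  | zero => simp
  | succ K ih =>
    have hK := K.le_add_right 1
    have hsplit := Ioc_union_Ioc_eq_Ioc (hu (Nat.zero_le K)) (hu hK)
    rw [← hsplit] at hg
    have hlast : ∫ x in Ioc (u K) (u (K + 1)), g x ∂f.measure
        = ∫ x in Ioc (u K) (u (K + 1)), (g x - c K) ∂f.measure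
          + c K * (f (u (K + 1)) - f (u K)) := by
      rw [integral_sub (hg.mono_set subset_union_right) (integrableOn_const measure_Ioc_lt_top.ne),
        setIntegral_const, smul_eq_mul, f.measureReal_Ioc (hu hK)]
      ring
    have h1 := ih (hg.mono_set subset_union_left) fun i hi => hε i (hi.trans K.lt_add_one)
    have h2 := f.abs_setIntegral_Ioc_le (hu hK) (hε K K.lt_add_one)
    rw [← hsplit, setIntegral_union (Ioc_disjoint_Ioc_of_le le_rfl) measurableSet_Ioc
      (hg.mono_set subset_union_left) (hg.mono_set subset_union_right), hlast,
      Finset.sum_range_succ, ← add_assoc, add_sub_add_right_eq_sub, add_sub_right_comm]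
    linarith [abs_add_le (∫ x in Ioc (u 0) (u K), g x ∂f.measure
      - ∑ i ∈ Finset.range K, c i * (f (u (i + 1)) - f (u i)))
      (∫ x in Ioc (u K) (u (K + 1)), (g x - c K) ∂f.measure)]

theorem abs_setIntegral_Ioc_sub_riemannStieltjesSum_le {g : ℝ → ℝ} {a h t ε : ℝ} {K : ℕ}
    (hh : 0 ≤ h) (hat : a ≤ t) (htK : t ≤ a + K * h) (hg : IntegrableOn g (Ioc a t) f.measure)
    (hmod : ∀ x ∈ Icc a t, ∀ y ∈ Icc a t, |x - y| ≤ h → |g x - g y| ≤ ε) :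
    |∫ x in Ioc a t, g x ∂f.measure - riemannStieltjesSum g f a h K t| ≤ ε * (f t - f a) := by
  set u : ℕ → ℝ := fun i => min (a + i * h) t
  have hu : Monotone u := fun i j hij =>
    min_le_min_right _ (add_le_add_right (mul_le_mul_of_nonneg_right (Nat.cast_le.2 hij) hh) a)
  have hu0 : u 0 = a := by simp [u, hat]
  have huK : u K = t := min_eq_right htK
  have key := f.abs_setIntegral_Ioc_sub_sum_le hu (hu0 ▸ huK ▸ hg) (fun i => g (a + i * h))
    (ε := ε) fun i _ x ⟨hux, hxu⟩ => by
      have hxt : x ≤ t := hxu.trans (min_le_right _ _)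
      have hix : a + i * h < x := (min_lt_iff.1 hux).resolve_right hxt.not_gt
      have hxi : x ≤ a + i * h + h := by
        have := hxu.trans (min_le_left _ _); push_cast at this; linarith
      have hai : a ≤ a + i * h := le_add_of_nonneg_right (by positivity)
      exact hmod x ⟨by linarith, hxt⟩ _ ⟨hai, by linarith⟩ (abs_le.2 ⟨by linarith, by linarith⟩)
  rwa [hu0, huK] at key

end StieltjesFunction

theorem TendstoUniformlyOn.eventually_sub_lt {ι : Type*} {l : Filter ι} {F : ι → ℝ → ℝ}
    {f : ℝ → ℝ} {a b M : ℝ} (hF : TendstoUniformlyOn F f l (Icc a b)) (hab : a ≤ b)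
    (hM : f b - f a < M) : ∀ᶠ i in l, F i b - F i a < M :=
  ((hF.tendsto_at ⟨hab, le_rfl⟩).sub (hF.tendsto_at ⟨le_rfl, hab⟩)).eventually_lt_const hM

theorem tendstoUniformlyOn_setIntegral_Ioc_of_continuousOn {ι : Type*}
    {l : Filter ι} {F : ι → StieltjesFunction ℝ} {f : StieltjesFunction ℝ} {g : ℝ → ℝ}
    {a b : ℝ} (hg : ContinuousOn g (Icc a b))
    (hF : TendstoUniformlyOn (fun i x => F i x) f l (Icc a b)) :
    TendstoUniformlyOn (fun i t => ∫ x in Ioc a t, g x ∂(F i).measure)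
      (fun t => ∫ x in Ioc a t, g x ∂f.measure) l (Icc a b) := by
  rcases lt_or_ge b a with hba | hab
  · simp [Icc_eq_empty_of_lt hba, tendstoUniformlyOn_empty]
  set M := f b - f a + 1
  have hM : 0 < M := by linarith [f.mono hab]
  rw [Metric.tendstoUniformlyOn_iff]
  intro ε hε
  have hscale : ∀ m ≤ M, ε / (3 * M) * m ≤ ε / 3 := fun m hm =>
    (mul_le_mul_of_nonneg_left hm (by positivity)).trans_eq (by field_simp)
  obtain ⟨δ, hδ, hmod⟩ := Metric.uniformContinuousOn_iff_le.1
    (isCompact_Icc.uniformContinuousOn_of_continuous hg) (ε / (3 * M)) (by positivity)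
  obtain ⟨K, hK⟩ := exists_nat_gt ((b - a) / δ)
  have hK0 : (0 : ℝ) < K := lt_of_le_of_lt (by have := sub_nonneg.2 hab; positivity) hK
  set h := (b - a) / K
  have hh : 0 ≤ h := by have := sub_nonneg.2 hab; positivity
  have hhδ : h ≤ δ := by
    rw [div_lt_iff₀ hδ] at hK; rw [div_le_iff₀ hK0]; linarith
  have hbK : a + K * h = b := by rw [mul_div_cancel₀ _ hK0.ne']; ring
  have hR := Metric.tendstoUniformlyOn_iff.1
    (tendstoUniformlyOn_riemannStieltjesSum hh hF g K) (ε / 3) (by positivity)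
  filter_upwards [hF.eventually_sub_lt hab (lt_add_one _), hR] with i hmass hRi t ht
  have hmod' : ∀ x ∈ Icc a t, ∀ y ∈ Icc a t, |x - y| ≤ h → |g x - g y| ≤ ε / (3 * M) :=
    fun x hx y hy hxy => hmod x (Icc_subset_Icc_right ht.2 hx) y (Icc_subset_Icc_right ht.2 hy)
      (hxy.trans hhδ)
  have hint (μ : StieltjesFunction ℝ) : IntegrableOn g (Ioc a t) μ.measure :=
    (hg.integrableOn_compact isCompact_Icc).mono_set
      (Ioc_subset_Icc_self.trans (Icc_subset_Icc_right ht.2))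
  have hf := f.abs_setIntegral_Ioc_sub_riemannStieltjesSum_le hh ht.1 (hbK ▸ ht.2) (hint f) hmod'
  have hFi := (F i).abs_setIntegral_Ioc_sub_riemannStieltjesSum_le hh ht.1 (hbK ▸ ht.2)
    (hint (F i)) hmod'
  have hf' := hscale _ (show f t - f a ≤ M by linarith [f.mono ht.2])
  have hFi' := hscale _ (show F i t - F i a ≤ M by linarith [(F i).mono ht.2, hmass])
  have hRt := hRi t ht
  rw [Real.dist_eq] at hRt ⊢
  calc _ ≤ _ := abs_sub_le _ (riemannStieltjesSum g f a h K t) _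
    _ ≤ _ := add_le_add_right (abs_sub_le _ (riemannStieltjesSum g (F i) a h K t) _) _
    _ < ε := by rw [abs_sub_comm _ (∫ x in Ioc a t, g x ∂(F i).measure)]; linarith

theorem tendstoUniformlyOn_setIntegral_Ioc_sub {ι : Type*} {l : Filter ι} {G : ι → ℝ → ℝ}
    {g : ℝ → ℝ} {F : ι → StieltjesFunction ℝ} {a b M : ℝ} (hG : ∀ i, Measurable (G i))
    (hg : ContinuousOn g (Icc a b)) (hGg : TendstoUniformlyOn G g l (Icc a b))
    (hF : ∀ᶠ i in l, F i b - F i a < M) :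
    TendstoUniformlyOn (fun i t => ∫ x in Ioc a t, G i x ∂(F i).measure
      - ∫ x in Ioc a t, g x ∂(F i).measure) 0 l (Icc a b) := by
  rw [Metric.tendstoUniformlyOn_iff]
  intro ε hε
  set δ := ε / (|M| + 1)
  have hδ : 0 < δ := by positivity
  have hδM : δ * M < ε := calc
    δ * M ≤ δ * |M| := mul_le_mul_of_nonneg_left (le_abs_self M) hδ.le
    _ < δ * (|M| + 1) := by gcongr; exact lt_add_one _
    _ = ε := div_mul_cancel₀ ε (by positivity)
  obtain ⟨C, hC⟩ := isCompact_Icc.exists_bound_of_continuousOn hg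
  filter_upwards [hF, Metric.tendstoUniformlyOn_iff.1 hGg δ hδ] with i hFi hGi t ht
  have hsub : Ioc a t ⊆ Icc a b := Ioc_subset_Icc_self.trans (Icc_subset_Icc_right ht.2)
  have hdiff : ∀ x ∈ Ioc a t, |G i x - g x| ≤ δ := fun x hx => by
    rw [← Real.dist_eq, dist_comm]; exact (hGi x (hsub hx)).le
  have hg_int : IntegrableOn g (Ioc a t) (F i).measure :=
    (hg.integrableOn_compact isCompact_Icc).mono_set hsub
  have hG_int : IntegrableOn (G i) (Ioc a t) (F i).measure :=
    Measure.integrableOn_of_bounded (M := C + δ) measure_Ioc_lt_top.ne (hG i).aestronglyMeasurable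
      ((ae_restrict_iff' measurableSet_Ioc).2 (Eventually.of_forall fun x hx => by
        have hgx := hC x (hsub hx)
        rw [Real.norm_eq_abs] at hgx ⊢
        linarith [abs_sub_abs_le_abs_sub (G i x) (g x), hdiff x hx]))
  rw [Pi.zero_apply, dist_zero_left, Real.norm_eq_abs, ← integral_sub hG_int hg_int]
  refine ((F i).abs_setIntegral_Ioc_le ht.1 hdiff).trans_lt (lt_of_le_of_lt ?_ hδM)
  exact mul_le_mul_of_nonneg_left (by linarith [(F i).mono ht.2]) hδ.le

theorem tendstoUniformlyOn_setIntegral_Ioc {ι : Type*} {l : Filter ι} {G : ι → ℝ → ℝ}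
    {g : ℝ → ℝ} {F : ι → StieltjesFunction ℝ} {f : StieltjesFunction ℝ} {a b : ℝ}
    (hG : ∀ i, Measurable (G i)) (hg : ContinuousOn g (Icc a b))
    (hGg : TendstoUniformlyOn G g l (Icc a b))
    (hF : TendstoUniformlyOn (fun i x => F i x) f l (Icc a b)) :
    TendstoUniformlyOn (fun i t => ∫ x in Ioc a t, G i x ∂(F i).measure)
      (fun t => ∫ x in Ioc a t, g x ∂f.measure) l (Icc a b) := by
  rcases lt_or_ge b a with hba | hab
  · simp [Icc_eq_empty_of_lt hba, tendstoUniformlyOn_empty]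
  have hA := tendstoUniformlyOn_setIntegral_Ioc_sub hG hg hGg
    (hF.eventually_sub_lt hab (lt_add_one _))
  have hB := tendstoUniformlyOn_setIntegral_Ioc_of_continuousOn hg hF
  simpa using hA.fun_add hB

theorem statement11_general
    (Xn : ℕ → ℝ → ℝ) (hXn : ∀ n, IsCadlag (Xn n))
    (Yn : ℕ → StieltjesFunction ℝ)
    (X Y : ℝ → ℝ) (hX : Continuous X)
    (hXconv : ∀ T > (0:ℝ),
      TendstoUniformlyOn (fun n => Xn n) X atTop (Set.Icc 0 T))
    (hYconv : ∀ T > (0:ℝ),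
      TendstoUniformlyOn (fun n t => Yn n t) Y atTop (Set.Icc 0 T)) :
    MonotoneOn Y (Set.Ici 0) ∧
    ∀ SF : StieltjesFunction ℝ, (∀ t, SF t = Y t) →
      ∀ T > (0:ℝ), TendstoUniformlyOn
        (fun n t => ∫ s in Set.Ioc (0:ℝ) t, Xn n s ∂(Yn n).measure)
        (fun t => ∫ s in Set.Ioc (0:ℝ) t, X s ∂SF.measure)
        atTop (Set.Icc 0 T) := by
  refine ⟨fun s (hs : 0 ≤ s) t _ hst => ?_, fun SF hSF T hT => ?_⟩
  · have hconv := hYconv (t + 1) (by linarith)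
    exact le_of_tendsto_of_tendsto' (hconv.tendsto_at ⟨hs, by linarith⟩)
      (hconv.tendsto_at ⟨hs.trans hst, by linarith⟩) fun n => (Yn n).mono hst
  · rw [← funext hSF] at hYconv
    exact tendstoUniformlyOn_setIntegral_Ioc
      (fun n => measurable_of_continuousWithinAt_Ici (hXn n).1) hX.continuousOn
      (hXconv T hT) (hYconv T hT)

/-- if `X_n` are càdlàg, `Y_n` are nondecreasing càdlàg (Stieltjes
functions), `X, Y` are continuous and `X_n → X`, `Y_n → Y` locally uniformly on
`[0, ∞)`, then `Y` is nondecreasing and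
`∫₀ᵗ X_n dY_n → ∫₀ᵗ X dY` locally uniformly in `t ≥ 0`. -/
theorem statement11
    (Xn : ℕ → ℝ → ℝ) (hXn : ∀ n, IsCadlag (Xn n))
    (Yn : ℕ → StieltjesFunction ℝ)
    (X Y : ℝ → ℝ) (hX : Continuous X) (hY : Continuous Y)
    (hXconv : ∀ T > (0:ℝ),
      TendstoUniformlyOn (fun n => Xn n) X atTop (Set.Icc 0 T))
    (hYconv : ∀ T > (0:ℝ),
      TendstoUniformlyOn (fun n t => Yn n t) Y atTop (Set.Icc 0 T)) :
    MonotoneOn Y (Set.Ici 0) ∧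
    ∀ SF : StieltjesFunction ℝ, (∀ t, SF t = Y t) →
      ∀ T > (0:ℝ), TendstoUniformlyOn
        (fun n t => ∫ s in Set.Ioc (0:ℝ) t, Xn n s ∂(Yn n).measure)
        (fun t => ∫ s in Set.Ioc (0:ℝ) t, X s ∂SF.measure)
        atTop (Set.Icc 0 T) :=
  statement11_general Xn hXn Yn X Y hX hXconv hYconv
end

section
/- Let (Θ_k)_{k≥1} be i.i.d., square-integrable, nonnegative integer-valued random variables and (Ξ_k)_{k≥1} i.i.d. standard exponential random variables independent of (Θ_k). For ρ > 0 and constants ν, α, δ > 0, set b_N = ((N²ν² + 2Nαδ)T/(2a)) · E[exp(−ρ(Nν² + 2αδ)/(2|Θ̃₁|))], where Θ̃₁ = Θ₁ − a ≠ 0 is assumed (and the term vanishes when Θ̃₁ = 0). Then b_N → 0 as N → ∞. -/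
/-!
Write `k_N = Nν² + 2αδ`, so that `0 ≤ N²ν² + 2Nαδ ≤ k_N² / ν²` and it suffices that
`k_N² E[e^{-ρ k_N / (2|Θ - a|)}] → 0`. The substitution `x = ρk/z` turns `k^n e^{-ρk/z}` into
`(z/ρ)^n x^n e^{-x}`, which is at most `n! (z/ρ)^n` and tends to `0` as `k → ∞`. For `z = 2|Θ - a|`
and `n = 2` this gives the integrable majorant `8(Θ - a)²/ρ²` and the pointwise limit, so dominated
convergence applies.
-/

open MeasureTheory ProbabilityTheory Set Filter
open Real Topology
open scoped Nat

lemma pow_mul_exp_neg_le_factorial {x : ℝ} (hx : 0 ≤ x) (n : ℕ) : x ^ n * exp (-x) ≤ n ! := by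
  rw [exp_neg, ← div_eq_mul_inv, div_le_iff₀ (exp_pos x), ← div_le_iff₀' (by positivity)]
  exact pow_div_factorial_le_exp x hx n

lemma pow_mul_exp_neg_mul_div_eq {ρ z : ℝ} (hρ : ρ ≠ 0) (hz : z ≠ 0) (k : ℝ) (n : ℕ) :
    k ^ n * exp (-(ρ * k) / z) = (z / ρ) ^ n * ((ρ * k / z) ^ n * exp (-(ρ * k / z))) := by
  rw [neg_div, ← mul_assoc, ← mul_pow]
  congr 2
  field_simp

lemma pow_mul_exp_neg_mul_div_le {ρ z k : ℝ} (hρ : 0 < ρ) (hz : 0 < z) (hk : 0 ≤ k) (n : ℕ) :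
    k ^ n * exp (-(ρ * k) / z) ≤ n ! * (z / ρ) ^ n := by
  rw [pow_mul_exp_neg_mul_div_eq hρ.ne' hz.ne', mul_comm (n ! : ℝ)]
  gcongr
  exact pow_mul_exp_neg_le_factorial (by positivity) n

lemma tendsto_pow_mul_exp_neg_mul_div {ρ z : ℝ} (hρ : 0 < ρ) (hz : 0 < z) (n : ℕ) :
    Tendsto (fun k => k ^ n * exp (-(ρ * k) / z)) atTop (𝓝 0) := by
  have hlin : Tendsto (fun k => ρ * k / z) atTop atTop := by
    simpa only [mul_div_right_comm ρ, id] using tendsto_id.const_mul_atTop (div_pos hρ hz)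
  simpa only [pow_mul_exp_neg_mul_div_eq hρ.ne' hz.ne', Function.comp_def, mul_zero] using
    ((tendsto_pow_mul_exp_neg_atTop_nhds_zero n).comp hlin).const_mul ((z / ρ) ^ n)

theorem tendsto_integral_pow_mul_exp_neg_div_abs_sub {Ω ι : Type*} [MeasurableSpace Ω]
    {μ : Measure Ω} {l : Filter ι} [l.IsCountablyGenerated] {X : Ω → ℝ} {a ρ : ℝ} {k : ι → ℝ}
    (n : ℕ) (hρ : 0 < ρ) (hX : Measurable X) (hXn : Integrable (fun ω => |X ω - a| ^ n) μ)
    (hk : Tendsto k l atTop) :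
    Tendsto (fun i => ∫ ω, k i ^ n *
        (if X ω = a then 0 else exp (-(ρ * k i) / (2 * |X ω - a|))) ∂μ) l (𝓝 0) := by
  set F : ι → Ω → ℝ := fun i ω =>
    k i ^ n * (if X ω = a then 0 else exp (-(ρ * k i) / (2 * |X ω - a|)))
  have hF_meas : ∀ᶠ i in l, AEStronglyMeasurable (F i) μ := .of_forall fun i =>
    (measurable_const.mul (Measurable.ite (hX (measurableSet_singleton a))
      measurable_const (by fun_prop))).aestronglyMeasurable
  have hF_bound : ∀ᶠ i in l, ∀ᵐ ω ∂μ, ‖F i ω‖ ≤ n ! * (2 / ρ) ^ n * |X ω - a| ^ n := by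
    filter_upwards [hk.eventually_ge_atTop 0] with i hki
    refine .of_forall fun ω => ?_
    by_cases hω : X ω = a
    · simp only [F, hω, if_true, mul_zero, norm_zero]
      positivity
    · have hz : 0 < 2 * |X ω - a| := by positivity [sub_ne_zero.mpr hω]
      rw [Real.norm_of_nonneg (by positivity)]
      convert pow_mul_exp_neg_mul_div_le hρ hz hki n using 1
      · simp only [F, hω, if_false]
      · ring
  have hF_lim : ∀ᵐ ω ∂μ, Tendsto (fun i => F i ω) l (𝓝 0) := .of_forall fun ω => by
    by_cases hω : X ω = a
    · simpa only [F, hω, if_true, mul_zero] using tendsto_const_nhds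
    · simpa only [F, hω, if_false, Function.comp_def] using
        (tendsto_pow_mul_exp_neg_mul_div hρ (by positivity [sub_ne_zero.mpr hω]) n).comp hk
  simpa only [integral_zero] using
    tendsto_integral_filter_of_dominated_convergence _ hF_meas hF_bound (hXn.const_mul _) hF_lim

lemma sq_mul_add_le_sq_add_div_sq {N ν c : ℝ} (hN : 0 ≤ N) (hν : 0 < ν) (hc : 0 ≤ c) :
    N ^ 2 * ν ^ 2 + N * c ≤ (N * ν ^ 2 + c) ^ 2 / ν ^ 2 := by
  rw [le_div_iff₀ (by positivity)]
  nlinarith [mul_nonneg (mul_nonneg hN hc) (sq_nonneg ν), sq_nonneg c]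

theorem statement14_general {Ω : Type*} [MeasureSpace Ω]
    (ρ ν α δ a T : ℝ) (hρ : 0 < ρ) (hν : 0 < ν) (hα : 0 < α) (hδ : 0 < δ)
    (Θ : Ω → ℝ) (hΘ_meas : Measurable Θ)
    (hΘ_sq : Integrable (fun ω => (Θ ω - a) ^ 2) (ℙ : Measure Ω))
    (b : ℕ → ℝ)
    (hb : ∀ N : ℕ, b N = ((N : ℝ) ^ 2 * ν ^ 2 + 2 * N * α * δ) * T / (2 * a) *
      ∫ ω, (if Θ ω = a then (0:ℝ)
        else Real.exp (-(ρ * ((N : ℝ) * ν ^ 2 + 2 * α * δ)) / (2 * |Θ ω - a|)))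
        ∂(ℙ : Measure Ω)) :
    Tendsto b atTop (nhds 0) := by
  set k : ℕ → ℝ := fun N => N * ν ^ 2 + 2 * α * δ
  set I : ℕ → ℝ := fun N => ∫ ω, (if Θ ω = a then (0:ℝ)
    else exp (-(ρ * k N) / (2 * |Θ ω - a|))) ∂(ℙ : Measure Ω)
  have hk : Tendsto k atTop atTop :=
    tendsto_atTop_add_const_right _ _ (tendsto_natCast_atTop_atTop.atTop_mul_const (by positivity))
  have hkI : Tendsto (fun N => k N ^ 2 * I N / ν ^ 2) atTop (𝓝 0) := by
    simpa only [integral_const_mul, zero_div] using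
      (tendsto_integral_pow_mul_exp_neg_div_abs_sub 2 hρ hΘ_meas (by simpa only [sq_abs] using hΘ_sq)
        hk).div_const (ν ^ 2)
  have hI : ∀ N, 0 ≤ I N := fun N => integral_nonneg fun ω => by dsimp only; split_ifs <;> positivity
  have hcoef (N : ℕ) : (N : ℝ) ^ 2 * ν ^ 2 + 2 * N * α * δ ≤ k N ^ 2 / ν ^ 2 := by
    convert sq_mul_add_le_sq_add_div_sq N.cast_nonneg hν (by positivity : 0 ≤ 2 * α * δ) using 1
    ring
  have hprod : Tendsto (fun N : ℕ => ((N : ℝ) ^ 2 * ν ^ 2 + 2 * N * α * δ) * I N) atTop (𝓝 0) :=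
    squeeze_zero (fun N => mul_nonneg (by positivity) (hI N))
      (fun N => by rw [mul_div_right_comm]; exact mul_le_mul_of_nonneg_right (hcoef N) (hI N)) hkI
  have hbI : b = fun N : ℕ => T / (2 * a) * (((N : ℝ) ^ 2 * ν ^ 2 + 2 * N * α * δ) * I N) :=
    funext fun N => (hb N).trans (by ring)
  simpa only [hbI, mul_zero] using hprod.const_mul (T / (2 * a))

/-- for `Θ₁` square integrable with `Θ̃₁ = Θ₁ - a`, and positive constants
`ρ, ν, α, δ, a, T`, the quantity
`b_N = ((N²ν² + 2Nαδ)T/(2a)) E[exp(-ρ(Nν² + 2αδ)/(2|Θ̃₁|))]`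
(with the integrand read as `0` on `{Θ̃₁ = 0}`) tends to `0` as `N → ∞`. -/
theorem statement14 {Ω : Type*} [MeasureSpace Ω] [IsProbabilityMeasure (ℙ : Measure Ω)]
    (ρ ν α δ a T : ℝ) (hρ : 0 < ρ) (hν : 0 < ν) (hα : 0 < α) (hδ : 0 < δ)
    (ha : 0 < a) (hT : 0 < T)
    (Θ : Ω → ℝ) (hΘ_meas : Measurable Θ)
    (hΘ_sq : Integrable (fun ω => (Θ ω - a) ^ 2) (ℙ : Measure Ω))
    (b : ℕ → ℝ)
    (hb : ∀ N : ℕ, b N = ((N : ℝ) ^ 2 * ν ^ 2 + 2 * N * α * δ) * T / (2 * a) *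
      ∫ ω, (if Θ ω = a then (0:ℝ)
        else Real.exp (-(ρ * ((N : ℝ) * ν ^ 2 + 2 * α * δ)) / (2 * |Θ ω - a|)))
        ∂(ℙ : Measure Ω)) :
    Tendsto b atTop (nhds 0) :=
  statement14_general ρ ν α δ a T hρ hν hα hδ Θ hΘ_meas hΘ_sq b hb
end
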